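/- (Corollary 2, part 2, of the paper.) Under Assumptions 1 and 2, for any b ∈ ℝ^K not in the finite sample identified set B*_n, the rejection probability satisfies ℙ(T_n(b) > q_{1−α}) ≥ 1 − exp( −(1/2)·( max{0, √n·Q(b) − q_{1−α}·max{ε, (1 + q_{1−α}²/n)^{−1/2}}} )² ). -/

import Mathlib

open MeasureTheory ProbabilityTheory

/-- Membership in the finite sample identified set `B*_n`. -/
def memFSID {Ω : Type*} [MeasurableSpace Ω] (P : Measure Ω) {n K : ℕ}
    (X : Fin n → Fin K → ℝ) (Y : Fin n → Ω → ℝ) (b : Fin K → ℝ) : Prop :=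
  ∃ Yt Ut : Fin n → Ω → ℝ,
    (∀ i, Measurable (Yt i)) ∧ (∀ i, Measurable (Ut i)) ∧
    (∀ i, ∀ᵐ ω ∂P, Yt i ω = if 0 ≤ (∑ j, X i j * b j) + Ut i ω then 1 else 0) ∧
    Measure.map (fun ω => fun i => Yt i ω) P =
      Measure.map (fun ω => fun i => Y i ω) P ∧
    (∀ i, P {ω | 0 ≤ Ut i ω} = 1/2) ∧
    iIndepFun
      (fun i ω => if 0 ≤ Ut i ω then (1 : ℝ) else 0) P

/-- Sample upper moment `m̂_u(b,v)` computed from outcomes `y`. -/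
noncomputable def muHatU {n K : ℕ} (X : Fin n → Fin K → ℝ) (b v : Fin K → ℝ)
    (y : Fin n → ℝ) : ℝ :=
  (n : ℝ)⁻¹ * ∑ i, (2 * y i - 1) *
    (if 0 ≤ (∑ j, X i j * b j) ∧ (∑ j, X i j * v j) < 0 then 1 else 0)

/-- Sample lower moment `m̂_l(b,v)` computed from outcomes `y`. -/
noncomputable def muHatL {n K : ℕ} (X : Fin n → Fin K → ℝ) (b v : Fin K → ℝ)
    (y : Fin n → ℝ) : ℝ :=
  (n : ℝ)⁻¹ * ∑ i, (1 - 2 * y i) *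
    (if (∑ j, X i j * b j) ≤ 0 ∧ 0 < (∑ j, X i j * v j) then 1 else 0)

/-- Sample variance `σ̂_u²(b,v)`. -/
noncomputable def sigHatU2 {n K : ℕ} (X : Fin n → Fin K → ℝ) (b v : Fin K → ℝ)
    (y : Fin n → ℝ) : ℝ :=
  (n : ℝ)⁻¹ * (∑ i, (if 0 ≤ (∑ j, X i j * b j) ∧ (∑ j, X i j * v j) < 0
      then (1:ℝ) else 0)) - (muHatU X b v y) ^ 2

/-- Sample variance `σ̂_l²(b,v)`. -/
noncomputable def sigHatL2 {n K : ℕ} (X : Fin n → Fin K → ℝ) (b v : Fin K → ℝ)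
    (y : Fin n → ℝ) : ℝ :=
  (n : ℝ)⁻¹ * (∑ i, (if (∑ j, X i j * b j) ≤ 0 ∧ 0 < (∑ j, X i j * v j)
      then (1:ℝ) else 0)) - (muHatL X b v y) ^ 2

/-- The test statistic `T_n(b)` computed from outcomes `y`. -/
noncomputable def Tstat {n K : ℕ} (X : Fin n → Fin K → ℝ)
    (Vu Vl : Finset (Fin K → ℝ)) (hu : Vu.Nonempty) (hl : Vl.Nonempty)
    (ε : ℝ) (b : Fin K → ℝ) (y : Fin n → ℝ) : ℝ :=
  max 0 (max
    (Vu.sup' hu fun v =>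
      Real.sqrt n * (-(muHatU X b v y)) /
        max (Real.sqrt (sigHatU2 X b v y)) ε)
    (Vl.sup' hl fun v =>
      Real.sqrt n * (-(muHatL X b v y)) /
        max (Real.sqrt (sigHatL2 X b v y)) ε))

/-!
If `√n Q ≤ q M`, where `M = max ε (1 + q²/n)^(-1/2)`, there is nothing to prove. Otherwise some
population moment, say `E m̂_u(b,v)` at a minimising `v`, equals `-Q < 0`. On the event
`T_n(b) ≤ q` the studentized moment at `v` is at most `q`; as the sample variance is at most
`1 - m̂²`, this quadratic constraint forces `m̂_u(b,v) ≥ -q M / √n`, i.e. the average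
`m̂_u(b,v)` exceeds its mean by at least `(√n Q - q M) / √n`. Its summands are independent
(each is a function of one `U_i`) with values in `[-1, 1]`, so Hoeffding's inequality bounds the
probability of the event by `exp(-(√n Q - q M)² / 2)`.
-/

open Real Finset

lemma le_of_studentized_le {s m p q ε : ℝ} (hs : 0 < s) (hq : 0 ≤ q) (hε : 0 < ε) (hp : p ≤ 1)
    (h : √s * -m / max √(p - m ^ 2) ε ≤ q) :
    -(q * max ε (√(1 + q ^ 2 / s))⁻¹) / √s ≤ m := by
  set M := max ε (√(1 + q ^ 2 / s))⁻¹
  have hss : 0 < √s := sqrt_pos.2 hs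
  by_contra! hm
  have hqM : q * M < √s * -m := by rw [lt_div_iff₀ hss] at hm; linarith
  have hm0 : 0 < √s * -m := lt_of_le_of_lt (mul_nonneg hq (hε.le.trans (le_max_left _ _))) hqM
  suffices q * max √(p - m ^ 2) ε < √s * -m from
    h.not_gt ((lt_div_iff₀ (lt_max_of_lt_right hε)).2 (by linarith))
  rcases max_cases √(p - m ^ 2) ε with ⟨hmax, -⟩ | ⟨hmax, -⟩
  · rw [hmax, ← sqrt_sq hq, ← sqrt_mul (sq_nonneg q), sqrt_lt' hm0]
    -- `M ≥ (1 + q²/s)^(-1/2)` turns `q M < √s (-m)` into `q² (1 - m²) < s m²`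
    have hr : 0 < √(1 + q ^ 2 / s) := sqrt_pos.2 (by positivity)
    have hq_lt : q < √s * -m * √(1 + q ^ 2 / s) := by
      rw [← div_lt_iff₀ hr, div_eq_mul_inv]
      exact (mul_le_mul_of_nonneg_left (le_max_right _ _) hq).trans_lt hqM
    have hsq := pow_lt_pow_left₀ hq_lt hq two_ne_zero
    rw [mul_pow, mul_pow, sq_sqrt hs.le, sq_sqrt (by positivity)] at hsq
    have hexp : s * (-m) ^ 2 * (1 + q ^ 2 / s) = s * m ^ 2 + q ^ 2 * m ^ 2 := by
      field_simp
    rw [mul_pow, sq_sqrt hs.le]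
    nlinarith [sq_nonneg q]
  · rw [hmax]
    exact (mul_le_mul_of_nonneg_left (le_max_left _ _) hq).trans_lt hqM

lemma sInf_quantile_nonneg {Ω : Type*} [MeasurableSpace Ω] {μ : Measure Ω} {T : Ω → ℝ}
    (hT : ∀ ω, 0 ≤ T ω) {α : ℝ} (hα : α < 1) :
    0 ≤ sInf {c : ℝ | 1 - α ≤ (μ {ω | T ω ≤ c}).toReal} := by
  refine Real.sInf_nonneg fun c hc => ?_
  by_contra! hc0
  have hempty : {ω | T ω ≤ c} = ∅ :=
    Set.eq_empty_of_forall_notMem fun ω hω => (hT ω).not_gt (lt_of_le_of_lt hω hc0)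
  rw [Set.mem_ofPred_eq, hempty, measure_empty, ENNReal.toReal_zero] at hc
  linarith

lemma eq_neg_or_eq_neg_of_max_neg_min {a b Q : ℝ} (hQ : Q = max (-min 0 a) (-min 0 b))
    (hQ0 : 0 < Q) : a = -Q ∨ b = -Q := by
  grind

lemma iIndepFun_of_threshold {Ω ι : Type*} [MeasurableSpace Ω] {P : Measure Ω}
    {U Y : ι → Ω → ℝ} {a : ι → ℝ} (hU : ∀ i, Measurable (U i)) (hindep : iIndepFun U P)
    (hY : ∀ i ω, Y i ω = if 0 ≤ a i + U i ω then 1 else 0) :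
    (∀ i, Measurable (Y i)) ∧ iIndepFun Y P := by
  obtain rfl : Y = fun i => (fun u => if 0 ≤ a i + u then (1 : ℝ) else 0) ∘ U i := funext₂ hY
  have hφ : ∀ i, Measurable fun u => if 0 ≤ a i + u then (1 : ℝ) else 0 := fun i =>
    Measurable.ite (measurableSet_le measurable_const (measurable_const.add measurable_id))
      measurable_const measurable_const
  exact ⟨fun i => (hφ i).comp (hU i), hindep.comp _ hφ⟩

section Probability

variable {Ω : Type*} [MeasurableSpace Ω] {P : Measure Ω} [IsProbabilityMeasure P]

lemma one_sub_measureReal_le_le_measureReal_lt (f : Ω → ℝ) (c : ℝ) :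
    1 - P.real {ω | f ω ≤ c} ≤ P.real {ω | c < f ω} := by
  have hunion : {ω | f ω ≤ c} ∪ {ω | c < f ω} = Set.univ := by
    ext ω; simp [le_or_gt]
  have := measureReal_union_le (μ := P) {ω | f ω ≤ c} {ω | c < f ω}
  rw [hunion, probReal_univ] at this
  linarith

lemma measureReal_average_ge_le {n : ℕ} (hn : 0 < n) {Z : Fin n → Ω → ℝ}
    (hZm : ∀ i, Measurable (Z i)) (hZi : iIndepFun Z P) (hZ : ∀ i ω, Z i ω ∈ Set.Icc (-1 : ℝ) 1)
    {x : ℝ} (hx : 0 ≤ x) :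
    P.real {ω | (∫ ω', (n : ℝ)⁻¹ * ∑ i, Z i ω' ∂P) + x / √n ≤ (n : ℝ)⁻¹ * ∑ i, Z i ω}
      ≤ exp (-x ^ 2 / 2) := by
  have hn' : (0 : ℝ) < n := by exact_mod_cast hn
  have hsub : ∀ i ∈ (univ : Finset (Fin n)),
      HasSubgaussianMGF (fun ω => Z i ω - P[Z i]) 1 P := fun i _ => by
    have h := hasSubgaussianMGF_of_mem_Icc (μ := P) (hZm i).aemeasurable (ae_of_all _ (hZ i))
    norm_num at h
    exact h
  have hcentered : iIndepFun (fun i => (fun z => z - P[Z i]) ∘ Z i) P :=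
    hZi.comp (fun i z => z - P[Z i]) fun _ => measurable_id.sub_const _
  have hint : ∀ i ∈ (univ : Finset (Fin n)), Integrable (Z i) P := fun i _ =>
    Integrable.of_mem_Icc (-1) 1 (hZm i).aemeasurable (ae_of_all _ (hZ i))
  calc P.real {ω | (∫ ω', (n : ℝ)⁻¹ * ∑ i, Z i ω' ∂P) + x / √n ≤ (n : ℝ)⁻¹ * ∑ i, Z i ω}
      ≤ P.real {ω | √n * x ≤ ∑ i, (Z i ω - P[Z i])} := by
        refine measureReal_mono fun ω hω => ?_
        simp only [Set.mem_ofPred_eq, integral_const_mul, integral_finsetSum _ hint,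
          sum_sub_distrib] at hω ⊢
        have hsn : √n * √n = n := mul_self_sqrt hn'.le
        field_simp at hω
        refine le_of_mul_le_mul_left ?_ (sqrt_pos.2 hn')
        linear_combination hω + x * hsn
    _ ≤ exp (-(√n * x) ^ 2 / (2 * ∑ _i : Fin n, (1 : NNReal))) :=
        HasSubgaussianMGF.measure_sum_ge_le_of_iIndepFun hcentered hsub (by positivity)
    _ = exp (-x ^ 2 / 2) := by
        congr 1
        simp only [sum_const, card_univ, Fintype.card_fin, nsmul_eq_mul, mul_one,
          NNReal.coe_natCast, mul_pow, sq_sqrt hn'.le]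
        field_simp

lemma measureReal_studentized_le_le {n : ℕ} (hn : 0 < n) {Z : Fin n → Ω → ℝ}
    (hZm : ∀ i, Measurable (Z i)) (hZi : iIndepFun Z P) (hZ : ∀ i ω, Z i ω ∈ Set.Icc (-1 : ℝ) 1)
    {w : Fin n → ℝ} (hw : ∀ i, w i ∈ Set.Icc (0 : ℝ) 1) {q ε Q : ℝ} (hq : 0 ≤ q) (hε : 0 < ε)
    (hQ : ∫ ω, (n : ℝ)⁻¹ * ∑ i, Z i ω * w i ∂P = -Q)
    (hx : q * max ε (√(1 + q ^ 2 / n))⁻¹ ≤ √n * Q) :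
    P.real {ω | √n * -((n : ℝ)⁻¹ * ∑ i, Z i ω * w i) /
        max √((n : ℝ)⁻¹ * ∑ i, w i - ((n : ℝ)⁻¹ * ∑ i, Z i ω * w i) ^ 2) ε ≤ q}
      ≤ exp (-(√n * Q - q * max ε (√(1 + q ^ 2 / n))⁻¹) ^ 2 / 2) := by
  have hn' : (0 : ℝ) < n := by exact_mod_cast hn
  have hw1 : (n : ℝ)⁻¹ * ∑ i, w i ≤ 1 := by
    rw [inv_mul_le_one₀ hn']
    simpa using sum_le_card_nsmul univ w 1 fun i _ => (hw i).2
  have hZw : ∀ i ω, Z i ω * w i ∈ Set.Icc (-1 : ℝ) 1 := fun i ω => by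
    obtain ⟨hz₀, hz₁⟩ := hZ i ω
    obtain ⟨hw₀, hw₁⟩ := hw i
    constructor <;> nlinarith
  refine (measureReal_mono fun ω hω => ?_).trans (measureReal_average_ge_le hn
    (fun i => (hZm i).mul_const (w i)) (hZi.comp (fun i z => z * w i) fun i =>
      measurable_id.mul_const (w i)) hZw (sub_nonneg.2 hx))
  have := le_of_studentized_le hn' hq hε hw1 hω
  simp only [Set.mem_ofPred_eq, hQ]
  rw [sub_div, mul_div_cancel_left₀ _ (sqrt_pos.2 hn').ne']
  linarith [neg_div (√(n : ℝ)) (q * max ε (√(1 + q ^ 2 / n))⁻¹)]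

end Probability

section TestStatistic

variable {Ω : Type*} [MeasurableSpace Ω] {P : Measure Ω} [IsProbabilityMeasure P]
  {n K : ℕ} (X : Fin n → Fin K → ℝ) {Vu Vl : Finset (Fin K → ℝ)} (hu : Vu.Nonempty)
  (hl : Vl.Nonempty) {ε : ℝ} (b : Fin K → ℝ) {Y : Fin n → Ω → ℝ}

lemma studentized_muHatU_le_tstat (y : Fin n → ℝ) {v : Fin K → ℝ} (hv : v ∈ Vu) :
    √n * -muHatU X b v y / max √(sigHatU2 X b v y) ε ≤ Tstat X Vu Vl hu hl ε b y := by
  unfold Tstat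
  exact le_max_of_le_right (le_max_of_le_left
    (le_sup' (fun v => √n * -muHatU X b v y / max √(sigHatU2 X b v y) ε) hv))

lemma studentized_muHatL_le_tstat (y : Fin n → ℝ) {v : Fin K → ℝ} (hv : v ∈ Vl) :
    √n * -muHatL X b v y / max √(sigHatL2 X b v y) ε ≤ Tstat X Vu Vl hu hl ε b y := by
  unfold Tstat
  exact le_max_of_le_right (le_max_of_le_right
    (le_sup' (fun v => √n * -muHatL X b v y / max √(sigHatL2 X b v y) ε) hv))

lemma measureReal_tstat_le_le_of_muHatU (hn : 0 < n) (hε : 0 < ε)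
    (hYm : ∀ i, Measurable (Y i)) (hYi : iIndepFun Y P) (hY : ∀ i ω, Y i ω ∈ Set.Icc (0 : ℝ) 1)
    {q Q : ℝ} (hq : 0 ≤ q) {v : Fin K → ℝ} (hv : v ∈ Vu)
    (hQ : ∫ ω, muHatU X b v (fun i => Y i ω) ∂P = -Q)
    (hx : q * max ε (√(1 + q ^ 2 / n))⁻¹ ≤ √n * Q) :
    P.real {ω | Tstat X Vu Vl hu hl ε b (fun i => Y i ω) ≤ q}
      ≤ exp (-(√n * Q - q * max ε (√(1 + q ^ 2 / n))⁻¹) ^ 2 / 2) := by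
  refine (measureReal_mono fun ω hω => ?_).trans <|
    measureReal_studentized_le_le hn (Z := fun i ω => 2 * Y i ω - 1)
      (fun i => ((hYm i).const_mul 2).sub_const 1)
      (hYi.comp (fun _ y => 2 * y - 1) fun _ => (measurable_id.const_mul 2).sub_const 1)
      (fun i ω => by constructor <;> linarith [(hY i ω).1, (hY i ω).2])
      (fun i => by split_ifs <;> simp) hq hε hQ hx
  exact (studentized_muHatU_le_tstat X hu hl b _ hv).trans hω

lemma measureReal_tstat_le_le_of_muHatL (hn : 0 < n) (hε : 0 < ε)
    (hYm : ∀ i, Measurable (Y i)) (hYi : iIndepFun Y P) (hY : ∀ i ω, Y i ω ∈ Set.Icc (0 : ℝ) 1)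
    {q Q : ℝ} (hq : 0 ≤ q) {v : Fin K → ℝ} (hv : v ∈ Vl)
    (hQ : ∫ ω, muHatL X b v (fun i => Y i ω) ∂P = -Q)
    (hx : q * max ε (√(1 + q ^ 2 / n))⁻¹ ≤ √n * Q) :
    P.real {ω | Tstat X Vu Vl hu hl ε b (fun i => Y i ω) ≤ q}
      ≤ exp (-(√n * Q - q * max ε (√(1 + q ^ 2 / n))⁻¹) ^ 2 / 2) := by
  refine (measureReal_mono fun ω hω => ?_).trans <|
    measureReal_studentized_le_le hn (Z := fun i ω => 1 - 2 * Y i ω)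
      (fun i => measurable_const.sub ((hYm i).const_mul 2))
      (hYi.comp (fun _ y => 1 - 2 * y) fun _ => measurable_const.sub (measurable_id.const_mul 2))
      (fun i ω => by constructor <;> linarith [(hY i ω).1, (hY i ω).2])
      (fun i => by split_ifs <;> simp) hq hε hQ hx
  exact (studentized_muHatL_le_tstat X hu hl b _ hv).trans hω

end TestStatistic

theorem corollary2_part2
    {Ω : Type*} [MeasurableSpace Ω] (P : Measure Ω) [IsProbabilityMeasure P]
    {n K : ℕ} (hn : 1 ≤ n)
    (X : Fin n → Fin K → ℝ) (β : Fin K → ℝ)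
    (U : Fin n → Ω → ℝ) (hU : ∀ i, Measurable (U i))
    (Y : Fin n → Ω → ℝ)
    (hY : ∀ i ω, Y i ω = if 0 ≤ (∑ j, X i j * β j) + U i ω then 1 else 0)
    (hindepU : iIndepFun U P)
    (ε : ℝ) (hε : 0 < ε)
    (Vu Vl : Finset (Fin K → ℝ)) (hu : Vu.Nonempty) (hl : Vl.Nonempty)
    (b : Fin K → ℝ)
    (α : ℝ) (hα : α ∈ Set.Ioo (0 : ℝ) 1)
    (q : ℝ)
    (hq : q = sInf {c : ℝ | 1 - α ≤
      (P {ω | Tstat X Vu Vl hu hl ε b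
          (fun i => if 0 ≤ U i ω then 1 else 0) ≤ c}).toReal})
    (Q : ℝ)
    (hQ : Q = max
      (-(min 0 (Vu.inf' hu fun v => ∫ ω, muHatU X b v (fun i => Y i ω) ∂P)))
      (-(min 0 (Vl.inf' hl fun v => ∫ ω, muHatL X b v (fun i => Y i ω) ∂P)))) :
    1 - Real.exp (-(1/2) *
        (max 0 (Real.sqrt n * Q - q * max ε (Real.sqrt (1 + q ^ 2 / n))⁻¹)) ^ 2)
      ≤ (P {ω | q < Tstat X Vu Vl hu hl ε b (fun i => Y i ω)}).toReal := by
  have hq0 : 0 ≤ q := hq ▸ sInf_quantile_nonneg (fun _ => le_max_left _ _) hα.2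
  set M := max ε (√(1 + q ^ 2 / n))⁻¹
  rcases le_or_gt (√n * Q - q * M) 0 with hx | hx
  · simp [max_eq_left hx]
  have hQ0 : 0 < Q := by
    have hqM : 0 ≤ q * M := mul_nonneg hq0 (hε.le.trans (le_max_left _ _))
    exact pos_of_mul_pos_right (by linarith) (sqrt_nonneg _)
  obtain ⟨hYm, hYi⟩ := iIndepFun_of_threshold hU hindepU hY
  have hY01 : ∀ i ω, Y i ω ∈ Set.Icc (0 : ℝ) 1 := fun i ω => by rw [hY]; split_ifs <;> simp
  have hbound : P.real {ω | Tstat X Vu Vl hu hl ε b (fun i => Y i ω) ≤ q}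
      ≤ exp (-(√n * Q - q * M) ^ 2 / 2) := by
    rcases eq_neg_or_eq_neg_of_max_neg_min hQ hQ0 with h | h
    · obtain ⟨v, hv, hvQ⟩ := exists_mem_eq_inf' hu fun v => ∫ ω, muHatU X b v (Y · ω) ∂P
      exact measureReal_tstat_le_le_of_muHatU X hu hl b hn hε hYm hYi hY01 hq0 hv (hvQ ▸ h)
        (by linarith)
    · obtain ⟨v, hv, hvQ⟩ := exists_mem_eq_inf' hl fun v => ∫ ω, muHatL X b v (Y · ω) ∂P
      exact measureReal_tstat_le_le_of_muHatL X hu hl b hn hε hYm hYi hY01 hq0 hv (hvQ ▸ h)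
        (by linarith)
  show _ ≤ P.real _
  rw [max_eq_right hx.le, neg_mul, ← mul_div_right_comm, one_mul, ← neg_div]
  linarith [one_sub_measureReal_le_le_measureReal_lt (P := P)
    (fun ω => Tstat X Vu Vl hu hl ε b (Y · ω)) q]
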